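/- Let p be a prime, h ≥ 1, and m₁, ..., m_h nonnegative integers. For G = ∏_{i=1}^{h} (ℤ/pⁱℤ)^{m_i}, Σ_{g ∈ G} 1/|g| = 1 + Σ_{l=1}^{h} (p^{Σ_{i=l}^{h} m_i} − 1) · p^{Σ_{i=1}^{l−1} i m_i + (l−1) Σ_{i=l}^{h} m_i} / p^l, where |g| is the order of g. -/

import Mathlib

/-!
Every element of `G` has order `p ^ l` for some `l ≤ h`, so the sum is `∑ₗ Oₗ / p ^ l`, where
`Oₗ = Nₗ - Nₗ₋₁` counts the elements of order exactly `p ^ l` and `Nₗ` those killed by `p ^ l`.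
Since the `p ^ l`-torsion of `ℤ/pⁱℤ` has `p ^ min l i` elements, `Nₗ = p ^ (∑ᵢ min l i * mᵢ)`;
splitting this sum at `i = l` gives `Nₗ = p ^ (S + l * A)` and `Nₗ₋₁ = p ^ (S + (l - 1) * A)`
with the same `S = ∑_{i<l} i mᵢ` and `A = ∑_{i≥l} mᵢ`, whence `Oₗ = (p ^ A - 1) p ^ (S + (l - 1) A)`.
-/

open Finset

lemma sum_range_comp_succ_eq_sum_Icc {M : Type*} [AddCommMonoid M] (f : ℕ → M) (n : ℕ) :
    ∑ i ∈ range n, f (i + 1) = ∑ i ∈ Icc 1 n, f i := by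
  rw [range_eq_Ico, sum_Ico_add' f, ← Ico_add_one_right_eq_Icc, zero_add]

lemma Nat.card_nsmul_eq_zero_pi {ι : Type*} [Fintype ι] {β : ι → Type*} [∀ i, AddMonoid (β i)]
    (n : ℕ) : Nat.card {g : ∀ i, β i // n • g = 0} = ∏ i, Nat.card {x : β i // n • x = 0} := by
  rw [← Nat.card_pi]
  exact Nat.card_congr
    ((Equiv.subtypeEquivRight fun g => by simp [funext_iff]).trans Equiv.subtypePiEquivPi)

lemma ZMod.card_nsmul_eq_zero (n d : ℕ) [NeZero n] :
    Nat.card {x : ZMod n // d • x = 0} = n.gcd d := by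
  have hker := IsAddCyclic.card_nsmulAddMonoidHom_ker (ZMod n) d
  rw [Nat.card_zmod] at hker
  rw [← hker]
  exact Nat.card_congr (Equiv.subtypeEquivRight fun x => by simp)

lemma Nat.gcd_pow_pow (p k l : ℕ) : (p ^ k).gcd (p ^ l) = p ^ min k l := by
  rcases le_total k l with hkl | hlk
  · rw [min_eq_left hkl, Nat.gcd_eq_left (pow_dvd_pow p hkl)]
  · rw [min_eq_right hlk, Nat.gcd_eq_right (pow_dvd_pow p hlk)]

lemma ZMod.card_prime_pow_nsmul_eq_zero {p : ℕ} [NeZero p] (k l : ℕ) :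
    Nat.card {x : ZMod (p ^ k) // p ^ l • x = 0} = p ^ min l k := by
  rw [ZMod.card_nsmul_eq_zero, Nat.gcd_pow_pow, min_comm]

section PrimePowerOrder

variable {G : Type*} [AddMonoid G] [Fintype G] {p : ℕ} [hp : Fact p.Prime]

lemma card_addOrderOf_eq_prime_pow_succ_add (l : ℕ) :
    Nat.card {g : G // addOrderOf g = p ^ (l + 1)} + Nat.card {g : G // p ^ l • g = 0} =
      Nat.card {g : G // p ^ (l + 1) • g = 0} := by
  classical
  simp only [Nat.card_eq_fintype_card, Fintype.card_subtype]
  rw [← card_union_of_disjoint]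
  · congr 1
    ext g
    simp only [mem_union, mem_filter, mem_univ, true_and]
    constructor
    · rintro (hg | hg)
      · rw [← hg]
        exact addOrderOf_nsmul_eq_zero g
      · rw [pow_succ, mul_nsmul, hg, nsmul_zero]
    · intro hg
      by_cases hl : p ^ l • g = 0
      · exact Or.inr hl
      · exact Or.inl (addOrderOf_eq_prime_pow hl hg)
  · refine disjoint_filter.2 fun g _ hord hl => ?_
    have := (Nat.pow_dvd_pow_iff_le_right hp.out.one_lt).1
      (hord ▸ addOrderOf_dvd_of_nsmul_eq_zero hl)
    omega

theorem sum_one_div_addOrderOf_of_prime_pow_nsmul_eq_zero {h : ℕ} (hG : ∀ g : G, p ^ h • g = 0) :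
    ∑ g : G, 1 / (addOrderOf g : ℚ) = 1 + ∑ l ∈ range h,
      ((Nat.card {g : G // p ^ (l + 1) • g = 0} : ℚ) - Nat.card {g : G // p ^ l • g = 0}) /
        (p : ℚ) ^ (l + 1) := by
  classical
  have hmaps : ∀ g ∈ (univ : Finset G), addOrderOf g ∈ (range (h + 1)).image (p ^ ·) := by
    intro g _
    obtain ⟨k, hk, hg⟩ := (Nat.dvd_prime_pow hp.out).1 (addOrderOf_dvd_of_nsmul_eq_zero (hG g))
    exact mem_image.2 ⟨k, mem_range.2 (Nat.lt_succ_of_le hk), hg.symm⟩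
  have hfiber (n : ℕ) : ∑ g : G with addOrderOf g = n, 1 / (addOrderOf g : ℚ) =
      Nat.card {g : G // addOrderOf g = n} / n := by
    rw [sum_congr rfl fun g hg => by rw [(mem_filter.1 hg).2], sum_const, nsmul_eq_mul,
      Nat.card_eq_fintype_card, Fintype.card_subtype, mul_one_div]
  rw [← sum_fiberwise_of_maps_to hmaps,
    sum_image fun a _ b _ hab => Nat.pow_right_injective hp.out.two_le hab, sum_range_succ',
    add_comm]
  simp only [hfiber]
  congr 1
  · simp [AddMonoid.addOrderOf_eq_one_iff]
  · refine sum_congr rfl fun l _ => ?_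
    rw [← card_addOrderOf_eq_prime_pow_succ_add l]
    push_cast
    ring

end PrimePowerOrder

lemma card_prime_pow_nsmul_eq_zero_pi {p : ℕ} [NeZero p] (h l : ℕ) (m : ℕ → ℕ) :
    Nat.card {g : ∀ i : Fin h, Fin (m ((i : ℕ) + 1)) → ZMod (p ^ ((i : ℕ) + 1)) //
      p ^ l • g = 0} = p ^ ∑ i ∈ Icc 1 h, min l i * m i := by
  rw [Nat.card_nsmul_eq_zero_pi, ← sum_range_comp_succ_eq_sum_Icc (fun i => min l i * m i),
    ← Fin.sum_univ_eq_sum_range (fun i => min l (i + 1) * m (i + 1)), ← prod_pow_eq_pow_sum]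
  refine prod_congr rfl fun i _ => ?_
  rw [Nat.card_nsmul_eq_zero_pi, prod_const, card_univ, Fintype.card_fin,
    ZMod.card_prime_pow_nsmul_eq_zero, pow_mul]

lemma sum_Icc_min_mul_eq (m : ℕ → ℕ) {h k r : ℕ} (hkh : k ≤ h) (hkr : k ≤ r) (hrk : r ≤ k + 1) :
    ∑ i ∈ Icc 1 h, min r i * m i = ∑ i ∈ Icc 1 k, i * m i + r * ∑ i ∈ Icc (k + 1) h, m i := by
  have hIcc (b : ℕ) : Icc 1 b = Ioc 0 b := Icc_add_one_left_eq_Ioc 0 b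
  rw [hIcc, hIcc, Icc_add_one_left_eq_Ioc, ← sum_Ioc_consecutive _ (Nat.zero_le k) hkh, mul_sum]
  congr 1 <;> refine sum_congr rfl fun i hi => ?_ <;> rw [mem_Ioc] at hi
  · rw [min_eq_right (by omega)]
  · rw [min_eq_left (by omega)]

theorem stmt_14_general (p : ℕ) (hp : p.Prime) [NeZero p] (h : ℕ) (m : ℕ → ℕ) :
    ∑ g : (∀ i : Fin h, Fin (m ((i : ℕ) + 1)) → ZMod (p ^ ((i : ℕ) + 1))),
        1 / (addOrderOf g : ℚ) =
      1 + ∑ l ∈ Finset.Icc 1 h,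
        ((p : ℚ) ^ (∑ i ∈ Finset.Icc l h, m i) - 1) *
          (p : ℚ) ^ (∑ i ∈ Finset.Icc 1 (l - 1), i * m i + (l - 1) * ∑ i ∈ Finset.Icc l h, m i) /
          (p : ℚ) ^ l := by
  have := Fact.mk hp
  have hG (g : ∀ i : Fin h, Fin (m ((i : ℕ) + 1)) → ZMod (p ^ ((i : ℕ) + 1))) : p ^ h • g = 0 := by
    funext i j
    simp [nsmul_eq_mul, (ZMod.natCast_eq_zero_iff _ _).2 (pow_dvd_pow p i.2)]
  rw [sum_one_div_addOrderOf_of_prime_pow_nsmul_eq_zero hG, ← sum_range_comp_succ_eq_sum_Icc]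
  congr 1
  refine sum_congr rfl fun l hl => ?_
  have hlh : l < h := mem_range.1 hl
  rw [card_prime_pow_nsmul_eq_zero_pi, card_prime_pow_nsmul_eq_zero_pi,
    sum_Icc_min_mul_eq m hlh.le le_rfl (Nat.le_add_right l 1),
    sum_Icc_min_mul_eq m hlh.le (Nat.le_add_right l 1) le_rfl, Nat.add_sub_cancel, add_one_mul]
  push_cast
  ring

theorem stmt_14 (p : ℕ) (hp : p.Prime) [NeZero p] (h : ℕ) (hh : 1 ≤ h) (m : ℕ → ℕ) :
    ∑ g : (∀ i : Fin h, Fin (m ((i : ℕ) + 1)) → ZMod (p ^ ((i : ℕ) + 1))),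
        1 / (addOrderOf g : ℚ) =
      1 + ∑ l ∈ Finset.Icc 1 h,
        ((p : ℚ) ^ (∑ i ∈ Finset.Icc l h, m i) - 1) *
          (p : ℚ) ^ (∑ i ∈ Finset.Icc 1 (l - 1), i * m i + (l - 1) * ∑ i ∈ Finset.Icc l h, m i) /
          (p : ℚ) ^ l :=
  stmt_14_general p hp h m
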